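/- arXiv:2005.02537 — 2 statements merged into one kernel-verified Lean document; each statement's English description precedes it below -/
import Mathlib

section
/- In a conditional cuckoo filter with chaining with duplicate cap d, starting from the empty filter, after any sequence of insertions (including cuckoo kicks and chaining moves as specified), for every fingerprint κ and every bucket pair {ℓ, ℓ ⊕ h(κ)}, the number of copies of κ stored in that bucket pair is monotone nondecreasing over the sequence of insertions and never exceeds d. -/
/-- The number of copies of fingerprint `κ` in the bucket pair `{ℓ, ℓ ^^^ h κ}`. -/
def pairCount {n : ℕ} {K : Type*} [DecidableEq K] (h : K → BitVec n)
    (S : BitVec n → Multiset K) (ℓ : BitVec n) (κ : K) : ℕ :=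
  if ℓ = ℓ ^^^ h κ then (S ℓ).count κ
  else (S ℓ).count κ + (S (ℓ ^^^ h κ)).count κ

/-- One step of the chained-insertion procedure, at the level of bucket contents:
either a copy of `κ` is inserted into some bucket `ℓ` of a pair currently holding
fewer than `d` copies of `κ` (this covers both initial insertions and insertions into
chained bucket pairs), or an entry `κ` is kicked from its bucket `ℓ` and reinserted
into its alternate bucket `ℓ ^^^ h κ`. -/
inductive CuckooStep {n : ℕ} {K : Type*} [DecidableEq K] (h : K → BitVec n) (d : ℕ) :
    (BitVec n → Multiset K) → (BitVec n → Multiset K) → Prop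
  | insert (S : BitVec n → Multiset K) (ℓ : BitVec n) (κ : K)
      (hcap : pairCount h S ℓ κ < d) :
      CuckooStep h d S (Function.update S ℓ (κ ::ₘ S ℓ))
  | kick (S : BitVec n → Multiset K) (ℓ : BitVec n) (κ : K)
      (hmem : κ ∈ S ℓ) :
      CuckooStep h d S
        (Function.update (Function.update S ℓ ((S ℓ).erase κ)) (ℓ ^^^ h κ)
          (κ ::ₘ (Function.update S ℓ ((S ℓ).erase κ)) (ℓ ^^^ h κ)))

lemma ne_xor_of_ne_zero {n : ℕ} (ℓ x : BitVec n) (hx : x ≠ 0#n) : ℓ ≠ ℓ ^^^ x := by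
  intro he
  apply hx
  have : ℓ ^^^ ℓ = ℓ ^^^ (ℓ ^^^ x) := congrArg _ he
  simpa [← BitVec.xor_assoc, BitVec.xor_self, BitVec.zero_xor] using this.symm

lemma xor_cancel' {n : ℕ} (a b : BitVec n) : (a ^^^ b) ^^^ b = a := by
  simp [BitVec.xor_assoc, BitVec.xor_self, BitVec.xor_zero]

/-- starting from the empty filter, along any sequence of insertion steps
(including cuckoo kicks), for every fingerprint `κ` and bucket pair `{ℓ, ℓ ^^^ h κ}`,
the number of copies of `κ` in the pair is monotone nondecreasing over each step and
never exceeds the duplicate cap `d`. -/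
theorem pairCount_monotone_and_bounded {n : ℕ} {K : Type*} [DecidableEq K]
    (h : K → BitVec n) (d : ℕ) (hh : ∀ κ, h κ ≠ 0#n) :
    (∀ S S', CuckooStep h d S S' →
      ∀ ℓ κ, pairCount h S ℓ κ ≤ pairCount h S' ℓ κ) ∧
    (∀ S, Relation.ReflTransGen (CuckooStep h d) (fun _ => 0) S →
      ∀ ℓ κ, pairCount h S ℓ κ ≤ d) := by
  have hne : ∀ (ℓ : BitVec n) (κ : K), ℓ ≠ ℓ ^^^ h κ :=
    fun ℓ κ => ne_xor_of_ne_zero ℓ _ (hh κ)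
  have hpc : ∀ (S : BitVec n → Multiset K) ℓ κ,
      pairCount h S ℓ κ = (S ℓ).count κ + (S (ℓ ^^^ h κ)).count κ := by
    intro S ℓ κ; simp [pairCount, hne ℓ κ]
  -- count formula for insert
  have hins : ∀ (S : BitVec n → Multiset K) (ℓa : BitVec n) (κa : K) (b : BitVec n) (κ : K),
      ((Function.update S ℓa (κa ::ₘ S ℓa)) b).count κ
        = (S b).count κ + (if b = ℓa ∧ κ = κa then 1 else 0) := by
    intro S ℓa κa b κ
    by_cases hb : b = ℓa
    · subst hb
      by_cases hk : κ = κa <;> simp [Function.update_self, Multiset.count_cons, hk]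
    · simp [Function.update_of_ne hb, hb]
  -- kick preserves all pair counts
  have hkick : ∀ (S : BitVec n → Multiset K) (ℓa : BitVec n) (κa : K),
      κa ∈ S ℓa →
      ∀ ℓ κ, pairCount h
        (Function.update (Function.update S ℓa ((S ℓa).erase κa)) (ℓa ^^^ h κa)
          (κa ::ₘ (Function.update S ℓa ((S ℓa).erase κa)) (ℓa ^^^ h κa))) ℓ κ
        = pairCount h S ℓ κ := by
    intro S ℓa κa hmem ℓ κ
    set T := Function.update S ℓa ((S ℓa).erase κa) with hT
    set S' := Function.update T (ℓa ^^^ h κa) (κa ::ₘ T (ℓa ^^^ h κa)) with hS'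
    have hcount : ∀ b : BitVec n, (S' b).count κ
        = (S b).count κ
          - (if b = ℓa ∧ κ = κa then 1 else 0)
          + (if b = ℓa ^^^ h κa ∧ κ = κa then 1 else 0) := by
      intro b
      have hTb : (T b).count κ = (S b).count κ - (if b = ℓa ∧ κ = κa then 1 else 0) := by
        by_cases hb : b = ℓa
        · subst hb
          by_cases hk : κ = κa
          · subst hk; simp [hT, Function.update_self, Multiset.count_erase_self]
          · simp [hT, Function.update_self, Multiset.count_erase_of_ne hk, hk]
        · simp [hT, Function.update_of_ne hb, hb]
      by_cases hb : b = ℓa ^^^ h κa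
      · subst hb
        by_cases hk : κ = κa
        · subst hk
          simp only [hS', Function.update_self, Multiset.count_cons_self, hTb]
          simp
        · simp only [hS', Function.update_self, Multiset.count_cons_of_ne hk, hTb]
          simp [hk]
      · simp [hS', Function.update_of_ne hb, hTb, hb]
    rw [hpc, hpc, hcount, hcount]
    by_cases hk : κ = κa
    · subst hk
      have hmem1 : 1 ≤ (S ℓa).count κ := Multiset.one_le_count_iff_mem.mpr hmem
      have hinv : ∀ x : BitVec n, (x ^^^ h κ = ℓa) ↔ (x = ℓa ^^^ h κ) := by
        intro x
        constructor <;> intro he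
        · rw [← he, xor_cancel']
        · rw [he, xor_cancel']
      have hnea : ℓa ≠ ℓa ^^^ h κ := hne ℓa κ
      by_cases h1 : ℓ = ℓa
      · simp only [h1, and_true, if_pos rfl, if_neg hnea, if_neg (Ne.symm hnea),
          eq_self_iff_true, if_true]
        omega
      · by_cases h2 : ℓ = ℓa ^^^ h κ
        · have h3 : ℓ ^^^ h κ = ℓa := (hinv ℓ).mpr h2
          have h1mem : 1 ≤ (S (ℓ ^^^ h κ)).count κ := by rw [h3]; exact hmem1
          have h4 : ℓ ^^^ h κ ≠ ℓa ^^^ h κ := by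
            intro hc
            apply h1
            have := congrArg (· ^^^ h κ) hc
            simpa [xor_cancel'] using this
          simp only [and_true, if_neg h1, if_pos h2, if_pos h3, if_neg h4]
          omega
        · have h3 : ℓ ^^^ h κ ≠ ℓa := fun hc => h2 ((hinv ℓ).mp hc)
          have h4 : ℓ ^^^ h κ ≠ ℓa ^^^ h κ := by
            intro hc
            apply h1
            have := congrArg (· ^^^ h κ) hc
            simpa [xor_cancel'] using this
          simp [h1, h2, h3, h4]
    · simp [hk]
  constructor
  · intro S S' hstep ℓ κ
    cases hstep with
    | insert ℓa κa hcap =>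
        rw [hpc, hpc, hins, hins]
        omega
    | kick ℓa κa hmem =>
        rw [hkick S ℓa κa hmem]
  · intro S hst
    induction hst with
    | refl => intro ℓ κ; simp [hpc]
    | @tail S₁ S₂ hab hbc ih =>
        intro ℓ κ
        cases hbc with
        | insert ℓa κa hcap =>
            rw [hpc, hins, hins]
            by_cases hk : κ = κa
            · subst hk
              by_cases h1 : ℓ = ℓa
              · rw [h1]
                rw [hpc] at hcap
                have h2' : ℓa ^^^ h κ ≠ ℓa := (hne ℓa κ).symm
                simp only [eq_self_iff_true, and_self, and_true, true_and, if_true,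
                  ite_true, if_neg h2']
                omega
              · by_cases h2 : ℓ ^^^ h κ = ℓa
                · have hℓ : ℓ = ℓa ^^^ h κ := by rw [← h2, xor_cancel']
                  have hpair : pairCount h S₁ ℓ κ = pairCount h S₁ ℓa κ := by
                    rw [hpc, hpc, h2]
                    conv_lhs => rw [hℓ]
                    exact Nat.add_comm _ _
                  have hle : pairCount h S₁ ℓ κ < d := hpair ▸ hcap
                  rw [hpc] at hle
                  simp only [and_true, if_neg h1, if_pos h2]
                  omega
                · have := ih ℓ κ
                  rw [hpc] at this
                  simp only [and_true, if_neg h1, if_neg h2]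
                  omega
            · have := ih ℓ κ
              rw [hpc] at this
              simp only [if_neg (fun hc : _ ∧ κ = κa => hk hc.2)]
              omega
        | kick ℓa κa hmem =>
            rw [hkick S₁ ℓa κa hmem]
            exact ih ℓ κ
end

section
/- The conditional cuckoo filter with chaining has no false negatives: if a row (k, a) matching a query (k, P) was inserted into the filter (or was discarded only because the maximum chain length L_max was exceeded), then the chained query procedure for (k, P) returns true. -/
/-- The chained query procedure for a fixed key and predicate, walking along the
key's chain of bucket pairs.  `matchP j = true` iff some entry for the key's
fingerprint in the `j`-th bucket pair has an attribute sketch matching the predicate;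
`cnt j` is the number of copies of the key's fingerprint in the `j`-th pair.
At each pair: return true on a match; if the pair holds exactly `d` copies, advance
to the next pair; otherwise return false.  If all `L_max` pairs are exhausted (the
last one holding `d` copies), return true unconditionally. -/
def chainQuery (d : ℕ) (matchP : ℕ → Bool) (cnt : ℕ → ℕ) : ℕ → ℕ → Bool
  | 0, _ => true
  | fuel + 1, j =>
      if matchP j then true
      else if cnt j = d then chainQuery d matchP cnt fuel (j + 1)
      else false

/-- the conditional cuckoo filter with chaining has no false negatives.
If a row matching the query was inserted into pair `i` of the chain (so, by the
placement invariant, every earlier pair holds `d` copies of the fingerprint, and,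
since attribute sketches have no false negatives, `matchP i = true`), or the row was
discarded only because the maximum chain length was exceeded (every pair of the chain
holds `d` copies), then the chained query returns true. -/
theorem chainQuery_no_false_negatives (d Lmax : ℕ) (matchP : ℕ → Bool) (cnt : ℕ → ℕ)
    (hcase :
      (∃ i < Lmax, matchP i = true ∧ ∀ j < i, cnt j = d) ∨
      (∀ j < Lmax, cnt j = d)) :
    chainQuery d matchP cnt Lmax 0 = true := by
  have aux : ∀ (f j : ℕ),
      ((∃ i < f, matchP (j + i) = true ∧ ∀ k < i, cnt (j + k) = d) ∨
        (∀ k < f, cnt (j + k) = d)) →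
      chainQuery d matchP cnt f j = true := by
    intro f
    induction f with
    | zero => intro j _; rfl
    | succ n ih =>
      intro j h
      rw [chainQuery]
      by_cases hm : matchP j = true
      · simp [hm]
      · simp only [hm, if_false]
        have hcnt : cnt j = d := by
          rcases h with ⟨i, hi, hmi, hall⟩ | hall
          · cases i with
            | zero => simp at hmi; exact absurd hmi hm
            | succ m => simpa using hall 0 (Nat.succ_pos m)
          · simpa using hall 0 (Nat.succ_pos n)
        simp only [hcnt, if_true]
        apply ih
        rcases h with ⟨i, hi, hmi, hall⟩ | hall
        · cases i with
          | zero => simp at hmi; exact absurd hmi hm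
          | succ m =>
            left
            refine ⟨m, by omega, by convert hmi using 2; omega, ?_⟩
            intro k hk
            have := hall (k + 1) (by omega)
            convert this using 2; omega
        · right
          intro k hk
          have := hall (k + 1) (by omega)
          convert this using 2; omega
  apply aux
  simpa using hcase
end
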